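/- The map from ℝP¹ × ℝP¹ to the projectivization P(M₂(ℝ)) sending a pair of lines ([u],[v]) (u, v nonzero vectors in ℝ²) to the class [u vᵀ] of the rank-one matrix u vᵀ is well defined and is a homeomorphism onto the set {[A] ∈ P(M₂(ℝ)) : det A = 0}. In particular the boundary at infinity of AdS₃, i.e. the projectivized null cone of the form -det, is homeomorphic to ℝP¹ × ℝP¹. -/

import Mathlib

noncomputable section

/-- The projectivization of a real topological vector space `V`: the quotient of the space of
nonzero vectors by the rescaling relation, with the quotient topology. -/
def Proj (V : Type*) [AddCommGroup V] [Module ℝ V] [TopologicalSpace V] :=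
  Quot (fun v w : {v : V // v ≠ 0} => ∃ c : ℝ, c ≠ 0 ∧ c • v.val = w.val)

instance (V : Type*) [AddCommGroup V] [Module ℝ V] [TopologicalSpace V] :
    TopologicalSpace (Proj V) :=
  inferInstanceAs (TopologicalSpace (Quot _))

/-!
The map `([u], [v]) ↦ [u vᵀ]` is continuous, and injective because `u vᵀ` determines `u` and `v`
up to scale. A nonzero `2 × 2` matrix with vanishing determinant has all its `2 × 2` minors zero,
so it is a column times a row divided by a nonzero pivot: the image is exactly `{det = 0}`.
The source is compact, being the image of a product of circles, and `P(M₂(ℝ))` is Hausdorff,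
since the rescaling relation is cut out by the closed conditions `φ v * ψ w = ψ v * φ w` for
linear forms `φ, ψ`. A continuous injection from a compact space into a Hausdorff space is a
homeomorphism onto its image.
-/

namespace Matrix

variable {m n K : Type*} [Field K]

theorem exists_smul_eq_of_vecMulVec_eq {u u' : m → K} {v v' : n → K} (hv' : v' ≠ 0)
    (h : vecMulVec u v = vecMulVec u' v') : ∃ c : K, c • u = u' := by
  obtain ⟨j, hj⟩ := Function.ne_iff.mp hv'
  refine ⟨v j / v' j, funext fun i => ?_⟩
  have hij : u i * v j = u' i * v' j := congr_fun₂ h i j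
  rw [Pi.smul_apply, smul_eq_mul, div_mul_eq_mul_div, div_eq_iff hj, mul_comm, hij]

theorem exists_vecMulVec_eq_of_mul_eq_mul {A : Matrix m n K} (hA : A ≠ 0)
    (h : ∀ i j k l, A i j * A k l = A i l * A k j) :
    ∃ u v, u ≠ 0 ∧ v ≠ 0 ∧ vecMulVec u v = A := by
  obtain ⟨k, l, hkl⟩ : ∃ k l, A k l ≠ 0 := by
    by_contra! h0
    exact hA (ext h0)
  refine ⟨fun i => A i l, fun j => A k j / A k l, Function.ne_iff.mpr ⟨k, hkl⟩,
    Function.ne_iff.mpr ⟨l, by simpa using hkl⟩, ext fun i j => ?_⟩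
  rw [vecMulVec_apply, mul_div_assoc', div_eq_iff hkl]
  exact (h i j k l).symm

instance : SeparatingDual ℝ (Matrix m n ℝ) :=
  inferInstanceAs (SeparatingDual ℝ (m → n → ℝ))

theorem mul_eq_mul_of_det_eq_zero_fin_two {R : Type*} [CommRing R] {A : Matrix (Fin 2) (Fin 2) R}
    (h : A.det = 0) (i j k l : Fin 2) : A i j * A k l = A i l * A k j := by
  rw [det_fin_two] at h
  fin_cases i <;> fin_cases j <;> fin_cases k <;> fin_cases l <;>
    simp only [Fin.zero_eta, Fin.mk_one] <;> first | ring | linear_combination h | linear_combination -h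

end Matrix

open Matrix

namespace Proj

section General

variable {V : Type*} [AddCommGroup V] [Module ℝ V] [TopologicalSpace V]

def mk : {v : V // v ≠ 0} → Proj V := Quot.mk _

theorem mk_eq_mk_iff {v w : {v : V // v ≠ 0}} : mk v = mk w ↔ ∃ c : ℝ, c • v.val = w.val := by
  have equiv : Equivalence fun v w : {v : V // v ≠ 0} => ∃ c : ℝ, c ≠ 0 ∧ c • v.val = w.val :=
    { refl := fun v => ⟨1, one_ne_zero, one_smul ℝ _⟩
      symm := fun ⟨c, hc, h⟩ => ⟨c⁻¹, inv_ne_zero hc, by rw [← h, inv_smul_smul₀ hc]⟩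
      trans := fun ⟨c, hc, h⟩ ⟨d, hd, h'⟩ => ⟨d * c, mul_ne_zero hd hc, by rw [mul_smul, h, h']⟩ }
  refine ⟨fun h => ?_, fun ⟨c, h⟩ => Quot.sound ⟨c, ?_, h⟩⟩
  · obtain ⟨c, -, h⟩ := equiv.eqvGen_iff.mp (Quot.eqvGen_exact h)
    exact ⟨c, h⟩
  · rintro rfl
    exact w.prop (by rw [← h, zero_smul])

theorem continuous_mk : Continuous (mk : {v : V // v ≠ 0} → Proj V) := continuous_quot_mk

theorem isOpenQuotientMap_mk [ContinuousConstSMul ℝ V] :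
    IsOpenQuotientMap (mk : {v : V // v ≠ 0} → Proj V) := by
  refine ⟨Quot.mk_surjective, continuous_mk, fun U hU => ?_⟩
  have saturation : mk ⁻¹' (mk '' U) = ⋃ c : ℝˣ,
      (fun v : {v : V // v ≠ 0} => ⟨(c : ℝ) • v.val, smul_ne_zero c.ne_zero v.prop⟩) ⁻¹' U := by
    ext w
    simp only [Set.mem_preimage, Set.mem_image, Set.mem_iUnion, mk_eq_mk_iff]
    constructor
    · rintro ⟨u, hu, c, hc⟩
      have hc0 : c ≠ 0 := by rintro rfl; exact w.prop (by rw [← hc, zero_smul])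
      refine ⟨(Units.mk0 c hc0)⁻¹, ?_⟩
      convert hu
      simp [← hc, inv_smul_smul₀ hc0]
    · rintro ⟨c, hc⟩
      exact ⟨_, hc, (c⁻¹ : ℝˣ), by simp⟩
  change IsOpen (mk ⁻¹' (mk '' U))
  rw [saturation]
  exact isOpen_iUnion fun c => hU.preimage (by fun_prop)

theorem mk_eq_mk_iff_forall_dual [SeparatingDual ℝ V] {v w : {v : V // v ≠ 0}} :
    mk v = mk w ↔ ∀ φ ψ : StrongDual ℝ V, φ v.val * ψ w.val = ψ v.val * φ w.val := by
  rw [mk_eq_mk_iff]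
  refine ⟨fun ⟨c, h⟩ φ ψ => by simp only [← h, map_smul, smul_eq_mul]; ring, fun h => ?_⟩
  obtain ⟨φ, hφ⟩ := SeparatingDual.exists_ne_zero (R := ℝ) v.prop
  refine ⟨φ w.val / φ v.val, (SeparatingDual.eq_iff_forall_dual_eq (R := ℝ)).mpr fun ψ => ?_⟩
  rw [map_smul, smul_eq_mul, div_mul_eq_mul_div, div_eq_iff hφ, mul_comm (ψ _), h φ ψ, mul_comm]

instance [ContinuousConstSMul ℝ V] [SeparatingDual ℝ V] : T2Space (Proj V) := by
  rw [t2Space_iff_of_isOpenQuotientMap isOpenQuotientMap_mk]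
  simp only [mk_eq_mk_iff_forall_dual, Set.ofPred_forall]
  exact isClosed_iInter fun φ => isClosed_iInter fun ψ => isClosed_eq (by fun_prop) (by fun_prop)

end General

instance {V : Type*} [NormedAddCommGroup V] [NormedSpace ℝ V] [FiniteDimensional ℝ V] :
    CompactSpace (Proj V) := by
  let g : Metric.sphere (0 : V) 1 → Proj V := fun x => mk ⟨x, ne_zero_of_mem_unit_sphere x⟩
  have hg : Function.Surjective g := by
    rintro ⟨v, hv⟩
    have hv' : ‖v‖ ≠ 0 := norm_ne_zero_iff.mpr hv
    refine ⟨⟨‖v‖⁻¹ • v, by simp [norm_smul, hv']⟩, mk_eq_mk_iff.mpr ⟨‖v‖, ?_⟩⟩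
    simp [smul_inv_smul₀ hv']
  exact ⟨hg.range_eq ▸ isCompact_range (continuous_mk.comp (by fun_prop))⟩

section Segre

variable {n : Type*}

def segre : Proj (n → ℝ) → Proj (n → ℝ) → Proj (Matrix n n ℝ) :=
  Quot.map₂ (fun (u v : {u : n → ℝ // u ≠ 0}) =>
      ⟨vecMulVec u.val v.val, vecMulVec_ne_zero u.prop v.prop⟩)
    (fun _ _ _ ⟨c, hc, h⟩ => ⟨c, hc, by simp [← h]⟩)
    (fun _ _ _ ⟨c, hc, h⟩ => ⟨c, hc, by simp [← h]⟩)

theorem segre_mk (u : {u : n → ℝ // u ≠ 0}) (v : {v : n → ℝ // v ≠ 0}) :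
    segre (mk u) (mk v) = mk ⟨vecMulVec u.val v.val, vecMulVec_ne_zero u.prop v.prop⟩ :=
  rfl

theorem continuous_uncurry_segre : Continuous (Function.uncurry (segre (n := n))) := by
  rw [← (isOpenQuotientMap_mk.prodMap isOpenQuotientMap_mk).continuous_comp_iff]
  exact continuous_mk.comp (((continuous_subtype_val.comp continuous_fst).matrix_vecMulVec
    (continuous_subtype_val.comp continuous_snd)).subtype_mk _)

theorem injective_uncurry_segre : Function.Injective (Function.uncurry (segre (n := n))) := by
  rintro ⟨⟨u⟩, ⟨v⟩⟩ ⟨⟨u'⟩, ⟨v'⟩⟩ h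
  change mk _ = mk _ at h
  obtain ⟨c, hc⟩ := mk_eq_mk_iff.mp h
  rw [← smul_vecMulVec] at hc
  obtain ⟨a, ha⟩ := exists_smul_eq_of_vecMulVec_eq v'.prop hc
  obtain ⟨b, hb⟩ := exists_smul_eq_of_vecMulVec_eq (u := v.val) (v := c • u.val) u'.prop
    (by rw [← transpose_vecMulVec, hc, transpose_vecMulVec])
  exact Prod.ext (mk_eq_mk_iff.mpr ⟨a * c, by rw [mul_smul, ha]⟩) (mk_eq_mk_iff.mpr ⟨b, hb⟩)

end Segre

theorem range_uncurry_segre_fin_two :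
    Set.range (Function.uncurry (segre (n := Fin 2))) =
      {p | ∃ A : {A : Matrix (Fin 2) (Fin 2) ℝ // A ≠ 0}, A.val.det = 0 ∧ p = mk A} := by
  ext p
  constructor
  · rintro ⟨⟨⟨u⟩, ⟨v⟩⟩, rfl⟩
    exact ⟨⟨_, vecMulVec_ne_zero u.prop v.prop⟩, det_vecMulVec _ _, rfl⟩
  · rintro ⟨A, hA, rfl⟩
    obtain ⟨u, v, hu, hv, huv⟩ :=
      exists_vecMulVec_eq_of_mul_eq_mul A.prop (mul_eq_mul_of_det_eq_zero_fin_two hA)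
    exact ⟨(mk ⟨u, hu⟩, mk ⟨v, hv⟩), (segre_mk _ _).trans (congrArg mk (Subtype.ext huv))⟩

end Proj

open Proj in
/-- the map `ℝP¹ × ℝP¹ → P(M₂(ℝ))`, `([u],[v]) ↦ [u vᵀ]`, is well defined and is
a homeomorphism onto `{[A] : det A = 0}`; in particular the boundary at infinity of `AdS₃`
(the projectivized null cone of `-det`) is homeomorphic to `ℝP¹ × ℝP¹`. -/
theorem boundary_AdS3_homeomorph_RP1_prod_RP1 :
    ∃ f : Proj (Fin 2 → ℝ) × Proj (Fin 2 → ℝ) ≃ₜ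
        {p : Proj (Matrix (Fin 2) (Fin 2) ℝ) |
          ∃ A : {A : Matrix (Fin 2) (Fin 2) ℝ // A ≠ 0}, A.val.det = 0 ∧ p = Quot.mk _ A},
      ∀ (u v : Fin 2 → ℝ) (hu : u ≠ 0) (hv : v ≠ 0) (hw : Matrix.vecMulVec u v ≠ 0),
        (f (Quot.mk _ ⟨u, hu⟩, Quot.mk _ ⟨v, hv⟩) : Proj (Matrix (Fin 2) (Fin 2) ℝ)) =
          Quot.mk _ ⟨Matrix.vecMulVec u v, hw⟩ := by
  have hsegre :=
    (continuous_uncurry_segre.isClosedEmbedding (injective_uncurry_segre (n := Fin 2))).isEmbedding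
  exact ⟨hsegre.toHomeomorph.trans (Homeomorph.setCongr range_uncurry_segre_fin_two),
    fun _ _ _ _ _ => rfl⟩
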